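/- arXiv:1512.01180 — 5 statements merged into one kernel-verified Lean document; each statement's English description precedes it below -/
import Mathlib

section
/- For fixed t ∈ (0,1), the function λ ↦ π_λ(t) = (exp(λt) − 1)/(exp(λ) − 1) (extended by π_0(t) = t) is strictly decreasing in λ ∈ ℝ. -/
open Set Real

noncomputable def piExt (l t : ℝ) : ℝ :=
  if l = 0 then t else (Real.exp (l * t) - 1) / (Real.exp l - 1)

/-!
With `u = exp λ`, `π_λ(t) = (u ^ t - 1) / (u - 1)` is the slope of the chord of the strictly concave
function `u ↦ u ^ t` between `1` and `u`, and `π_0(t) = t` is its derivative at `1`. Chord slopes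
of a strictly concave function from a fixed point, extended there by the derivative, are strictly
decreasing, and `exp` is strictly increasing.
-/

theorem StrictConcaveOn.strictAntiOn_update_slope {S : Set ℝ} {f : ℝ → ℝ} {a f' : ℝ}
    (hf : StrictConcaveOn ℝ S f) (ha : a ∈ S) (hf' : HasDerivAt f f' a) :
    StrictAntiOn (Function.update (slope f a) a f') S := by
  intro x hx y hy hxy
  rcases eq_or_ne x a with rfl | hxa
  · rw [Function.update_self, Function.update_of_ne hxy.ne']
    exact hf.slope_lt_of_hasDerivAt hx hy hxy hf'
  rcases eq_or_ne y a with rfl | hya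
  · rw [Function.update_self, Function.update_of_ne hxa, slope_comm]
    exact hf.lt_slope_of_hasDerivAt hx hy hxy hf'
  rw [Function.update_of_ne hxa, Function.update_of_ne hya, slope_def_field, slope_def_field]
  exact hf.secant_strict_mono ha hx hy hxa hya hxy

theorem piExt_eq_update_slope_rpow (l t : ℝ) :
    piExt l t = Function.update (slope (fun u : ℝ => u ^ t) 1) 1 t (exp l) := by
  rcases eq_or_ne l 0 with rfl | hl
  · simp [piExt]
  rw [Function.update_of_ne (by simpa using hl), slope_def_field, piExt, if_neg hl,
    one_rpow, exp_mul]

theorem stmt_3 (t : ℝ) (ht : t ∈ Ioo (0:ℝ) 1) :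
    StrictAnti (fun l : ℝ => piExt l t) := by
  have hconcave := strictConcaveOn_rpow ht.1 ht.2
  have hderiv : HasDerivAt (fun u : ℝ => u ^ t) t 1 := by
    simpa using hasDerivAt_rpow_const (x := 1) (p := t) (Or.inl one_ne_zero)
  intro a b hab
  simp only [piExt_eq_update_slope_rpow]
  exact hconcave.strictAntiOn_update_slope (by simp) hderiv (exp_pos a).le (exp_pos b).le
    (exp_lt_exp.2 hab)
end

section
/- Let λ ∈ ℝ, n ≥ 1, 1 ≤ i ≤ n, and t ∈ [0,1]. Let Δₙ = {(t₁,…,tₙ) ∈ [0,1]ⁿ : t₁ < t₂ < ⋯ < tₙ} and Z_λ = ∫_{Δₙ} exp(λ·Σⱼ tⱼ) dt. Then (1/Z_λ) ∫_{Δₙ ∩ {tᵢ ≤ t}} exp(λ·Σⱼ tⱼ) dt equals the probability that a binomial random variable with parameters n and π_λ(t) is at least i, where π_λ(t) = (exp(λt)−1)/(exp(λ)−1) (and π_0(t) = t). -/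
open Set Real MeasureTheory

def orderedSimplex (n : ℕ) : Set (Fin n → ℝ) :=
  {t | (∀ j, t j ∈ Set.Icc (0:ℝ) 1) ∧ StrictMono t}

/-! Weight `[0,1]` by `e^{λx}`; then `e^{λ Σ sⱼ}` on the cube is the product weight, and the cube
is, up to the null diagonals, the disjoint union of the `n!` permuted copies of `Δₙ`. On `Δₙ`
the event `tᵢ ≤ t` says that at least `i` coordinates are `≤ t`, so both integrals over `Δₙ` are
`1/n!` times integrals of symmetric functions over the cube. Splitting each coordinate's weight
into its parts on `[0,t]` and `(t,1]` and expanding the product, the cube integral of the event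
becomes `Σ_{k ≥ i} C(n,k) aᵏ bⁿ⁻ᵏ` by Fubini, where `a`, `b` are the weights of `[0,t]` and
`(t,1]`; normalising by `(a+b)ⁿ` gives the binomial tail with `a/(a+b) = π_λ(t)`. -/

open scoped Finset

lemma volume_setOf_not_injective (n : ℕ) :
    volume {s : Fin n → ℝ | ¬ Function.Injective s} = 0 := by
  let diag (p : Fin n × Fin n) : Submodule ℝ (Fin n → ℝ) :=
    LinearMap.ker (LinearMap.proj (R := ℝ) (φ := fun _ : Fin n => ℝ) p.1 - LinearMap.proj p.2)
  have hsub : {s : Fin n → ℝ | ¬ Function.Injective s} ⊆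
      ⋃ (p : Fin n × Fin n) (_ : p.1 ≠ p.2), (diag p : Set (Fin n → ℝ)) := by
    intro s hs
    obtain ⟨a, b, hab, hne⟩ := by simpa [Function.Injective] using hs
    exact mem_iUnion₂.2 ⟨(a, b), hne, by simpa [diag, sub_eq_zero] using hab⟩
  refine measure_mono_null hsub (measure_iUnion_null fun p => measure_iUnion_null fun hne => ?_)
  refine Measure.addHaar_submodule _ _ fun h => ?_
  have : Pi.single p.1 (1 : ℝ) ∈ diag p := h ▸ Submodule.mem_top
  simp [diag, hne.symm] at this

lemma measurableSet_setOf_strictMono (n : ℕ) : MeasurableSet {s : Fin n → ℝ | StrictMono s} := by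
  simp only [StrictMono, ofPred_forall]
  exact .iInter fun j => .iInter fun k => .iInter fun _ =>
    measurableSet_lt (measurable_pi_apply j) (measurable_pi_apply k)

lemma eq_of_strictMono_comp {n : ℕ} {s : Fin n → ℝ} (hs : Function.Injective s)
    {σ τ : Equiv.Perm (Fin n)} (hσ : StrictMono (s ∘ σ)) (hτ : StrictMono (s ∘ τ)) : σ = τ :=
  Equiv.ext fun j => hs (congrFun (Tuple.unique_monotone hσ.monotone hτ.monotone) j)

theorem integral_eq_factorial_smul_setIntegral_strictMono {E : Type*} [NormedAddCommGroup E]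
    [NormedSpace ℝ E] {n : ℕ} {F : (Fin n → ℝ) → E} (hF : Integrable F)
    (hsym : ∀ (σ : Equiv.Perm (Fin n)) s, F (s ∘ σ) = F s) :
    ∫ s, F s = n.factorial • ∫ s in {s | StrictMono s}, F s := by
  let C (σ : Equiv.Perm (Fin n)) : Set (Fin n → ℝ) := {s | StrictMono (s ∘ σ)}
  have hCmeas σ : MeasurableSet (C σ) :=
    (measurableSet_setOf_strictMono n).preimage
      (measurable_pi_lambda _ fun j => measurable_pi_apply (σ j))
  have hC σ : ∫ s in C σ, F s = ∫ s in {s | StrictMono s}, F s := by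
    let e := MeasurableEquiv.piCongrLeft (fun _ => ℝ) σ
    have he x : e x = x ∘ σ.symm := by
      ext j; simp [e, MeasurableEquiv.coe_piCongrLeft, Equiv.piCongrLeft_apply_eq_cast]
    have hpre : e ⁻¹' C σ = {s | StrictMono s} := by
      ext x; simp [C, he, Function.comp_assoc]
    rw [← (volume_measurePreserving_piCongrLeft _ σ).setIntegral_preimage_emb e.measurableEmbedding,
      hpre]
    exact setIntegral_congr_fun (measurableSet_setOf_strictMono n) fun x _ => by
      rw [he, hsym]
  have hcover : (⋃ σ, C σ) =ᵐ[volume] (univ : Set (Fin n → ℝ)) := by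
    refine (ae_eq_univ.2 <| measure_mono_null (fun s hs => ?_) (volume_setOf_not_injective n))
    intro hinj
    exact hs (mem_iUnion.2 ⟨Tuple.sort s,
      (Tuple.monotone_sort s).strictMono_of_injective (hinj.comp (Tuple.sort s).injective)⟩)
  have hdisj : Pairwise (Function.onFun (AEDisjoint volume) C) := fun σ τ hne =>
    measure_mono_null (fun s hs hinj => hne (eq_of_strictMono_comp hinj hs.1 hs.2))
      (volume_setOf_not_injective n)
  calc ∫ s, F s = ∫ s in ⋃ σ, C σ, F s := by
        rw [setIntegral_congr_set hcover, Measure.restrict_univ]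
    _ = ∑' σ, ∫ s in C σ, F s :=
      integral_iUnion_ae (fun σ => (hCmeas σ).nullMeasurableSet) hdisj hF.integrableOn
    _ = n.factorial • ∫ s in {s | StrictMono s}, F s := by
      simp [tsum_fintype, hC, Fintype.card_perm]

section BinomialDecomposition

variable {ι α : Type*} [Fintype ι] [DecidableEq ι]

lemma prod_mul_card_filter_eq_sum {R : Type*} [CommSemiring R] (U : Set α)
    [DecidablePred (· ∈ U)] (g : α → R) (φ : ℕ → R) (s : ι → α) :
    (∏ j, g (s j)) * φ #{j | s j ∈ U} =
      ∑ T : Finset ι, φ #T * ((∏ j ∈ T, U.indicator g (s j)) * ∏ j ∈ Tᶜ, Uᶜ.indicator g (s j)) := by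
  simp_rw [← U.indicator_self_add_compl_apply g, Fintype.prod_add, Finset.sum_mul]
  refine Finset.sum_congr rfl fun T _ => ?_
  by_cases hT : (∏ j ∈ T, U.indicator g (s j)) * ∏ j ∈ Tᶜ, Uᶜ.indicator g (s j) = 0
  · simp [hT]
  -- a nonzero term of the expansion pins down which coordinates lie in `U`
  have hmem {j} (hj : j ∈ T) : s j ∈ U := by
    by_contra h
    exact hT (by rw [Finset.prod_eq_zero hj (indicator_of_notMem h g), zero_mul])
  have hnotMem {j} (hj : j ∉ T) : s j ∉ U := fun h => hT (by
    rw [Finset.prod_eq_zero (Finset.mem_compl.2 hj) (indicator_of_notMem (notMem_compl_iff.2 h) g),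
      mul_zero])
  have hfilter : ({j | s j ∈ U} : Finset ι) = T := by
    ext j
    by_cases hj : j ∈ T <;> simp [hj, hmem, hnotMem]
  rw [hfilter, mul_comm]

lemma prod_indicator_mul_prod_indicator_compl_eq_prod_piecewise {R : Type*} [CommSemiring R]
    (U : Set α) (g : α → R) (T : Finset ι) (s : ι → α) :
    (∏ j ∈ T, U.indicator g (s j)) * ∏ j ∈ Tᶜ, Uᶜ.indicator g (s j) =
      ∏ j, T.piecewise (fun _ => U.indicator g) (fun _ => Uᶜ.indicator g) j (s j) := by
  rw [← Finset.prod_mul_prod_compl T]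
  congr 1 <;> refine Finset.prod_congr rfl fun j hj => ?_
  · rw [T.piecewise_eq_of_mem _ _ hj]
  · rw [T.piecewise_eq_of_notMem _ _ (Finset.mem_compl.1 hj)]

variable {𝕜 : Type*} [RCLike 𝕜] [MeasurableSpace α] {μ : Measure α} [SigmaFinite μ]
  {U : Set α} {g : α → 𝕜}

lemma integrable_prod_indicator_mul_prod_indicator_compl (hU : MeasurableSet U)
    (hg : Integrable g μ) (T : Finset ι) :
    Integrable (fun s => (∏ j ∈ T, U.indicator g (s j)) * ∏ j ∈ Tᶜ, Uᶜ.indicator g (s j))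
      (Measure.pi fun _ => μ) := by
  simp_rw [prod_indicator_mul_prod_indicator_compl_eq_prod_piecewise]
  refine Integrable.fintype_prod fun j => ?_
  by_cases hj : j ∈ T
  · simpa [hj] using hg.indicator hU
  · simpa [hj] using hg.indicator hU.compl

lemma integral_prod_indicator_mul_prod_indicator_compl (hU : MeasurableSet U) (T : Finset ι) :
    ∫ s, (∏ j ∈ T, U.indicator g (s j)) * ∏ j ∈ Tᶜ, Uᶜ.indicator g (s j)
        ∂(Measure.pi fun _ => μ) =
      (∫ x in U, g x ∂μ) ^ #T * (∫ x in Uᶜ, g x ∂μ) ^ #Tᶜ := by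
  simp_rw [prod_indicator_mul_prod_indicator_compl_eq_prod_piecewise,
    integral_fintype_prod_eq_prod]
  have h j : ∫ x, T.piecewise (fun _ => U.indicator g) (fun _ => Uᶜ.indicator g) j x ∂μ =
      T.piecewise (fun _ => ∫ x in U, g x ∂μ) (fun _ => ∫ x in Uᶜ, g x ∂μ) j := by
    by_cases hj : j ∈ T
    · simp [hj, integral_indicator hU]
    · simp [hj, integral_indicator hU.compl]
  simp_rw [h, Finset.prod_piecewise, Finset.univ_inter, ← Finset.compl_eq_univ_sdiff,
    Finset.prod_const]

theorem integrable_prod_mul_card_filter [DecidablePred (· ∈ U)] (hU : MeasurableSet U)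
    (hg : Integrable g μ)
    (φ : ℕ → 𝕜) :
    Integrable (fun s => (∏ j, g (s j)) * φ #{j | s j ∈ U}) (Measure.pi fun _ : ι => μ) := by
  simp_rw [prod_mul_card_filter_eq_sum]
  exact integrable_finsetSum _ fun T _ =>
    (integrable_prod_indicator_mul_prod_indicator_compl hU hg T).const_mul _

theorem integral_prod_mul_card_filter [DecidablePred (· ∈ U)] (hU : MeasurableSet U)
    (hg : Integrable g μ)
    (φ : ℕ → 𝕜) :
    ∫ s, (∏ j, g (s j)) * φ #{j | s j ∈ U} ∂Measure.pi (fun _ : ι => μ) =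
      ∑ k ∈ Finset.range (Fintype.card ι + 1), (Fintype.card ι).choose k * φ k *
        (∫ x in U, g x ∂μ) ^ k * (∫ x in Uᶜ, g x ∂μ) ^ (Fintype.card ι - k) := by
  simp_rw [prod_mul_card_filter_eq_sum]
  rw [integral_finsetSum _ fun T _ =>
    (integrable_prod_indicator_mul_prod_indicator_compl hU hg T).const_mul _]
  simp_rw [integral_const_mul, integral_prod_indicator_mul_prod_indicator_compl hU,
    Finset.card_compl]
  rw [← Finset.powerset_univ, Finset.sum_powerset_apply_card (fun k =>
    φ k * ((∫ x in U, g x ∂μ) ^ k * (∫ x in Uᶜ, g x ∂μ) ^ (Fintype.card ι - k)))]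
  simp [nsmul_eq_mul, mul_assoc]

end BinomialDecomposition

lemma sum_choose_mul_pow_mul_pow_div_add_pow {K : Type*} [Field K] {a b : K} (hab : a + b ≠ 0)
    {n : ℕ} {s : Finset ℕ} (hs : ∀ m ∈ s, m ≤ n) :
    (∑ m ∈ s, n.choose m * a ^ m * b ^ (n - m)) / (a + b) ^ n =
      ∑ m ∈ s, n.choose m * (a / (a + b)) ^ m * (1 - a / (a + b)) ^ (n - m) := by
  rw [Finset.sum_div]
  refine Finset.sum_congr rfl fun m hm => ?_
  rw [one_sub_div hab, add_sub_cancel_left, div_pow, div_pow, ← pow_mul_pow_sub (a + b) (hs m hm)]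
  field_simp

noncomputable def expWeight (l : ℝ) : ℝ → ℝ := (Icc 0 1).indicator fun x => exp (l * x)

lemma integrable_expWeight (l : ℝ) : Integrable (expWeight l) :=
  (continuous_exp.comp (continuous_const.mul continuous_id)).integrableOn_Icc.integrable_indicator
    measurableSet_Icc

lemma integral_Icc_exp_mul (l : ℝ) {t : ℝ} (ht : 0 ≤ t) :
    ∫ x in Icc 0 t, exp (l * x) = if l = 0 then t else (exp (l * t) - 1) / l := by
  rw [integral_Icc_eq_integral_Ioc, ← intervalIntegral.integral_of_le ht]
  split_ifs with hl
  · simp [hl]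
  · rw [intervalIntegral.integral_comp_mul_left (fun y => exp y) hl, integral_exp]
    simp [div_eq_inv_mul]

lemma integral_expWeight_ne_zero (l : ℝ) : ∫ x, expWeight l x ≠ 0 := by
  rw [expWeight, integral_indicator measurableSet_Icc, integral_Icc_exp_mul l zero_le_one]
  split_ifs with hl
  · exact one_ne_zero
  · exact div_ne_zero (sub_ne_zero.2 (by simpa using hl)) hl

lemma piExt_eq_div {l t : ℝ} (ht0 : 0 ≤ t) (ht1 : t ≤ 1) :
    piExt l t = (∫ x in Iic t, expWeight l x) / ∫ x, expWeight l x := by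
  have hIcc : Iic t ∩ Icc 0 1 = Icc 0 t := by
    ext x; simp only [mem_inter_iff, mem_Iic, mem_Icc]; constructor <;> intro h <;> grind
  rw [expWeight, setIntegral_indicator measurableSet_Icc, integral_indicator measurableSet_Icc,
    hIcc, integral_Icc_exp_mul l ht0, integral_Icc_exp_mul l zero_le_one, piExt, mul_one]
  split_ifs with hl
  · rw [div_one]
  · rw [div_div_div_cancel_right₀ hl]

lemma measurableSet_orderedSimplex (n : ℕ) : MeasurableSet (orderedSimplex n) := by
  have : orderedSimplex n = (⋂ j, (fun s => s j) ⁻¹' Icc 0 1) ∩ {s | StrictMono s} := by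
    ext; simp [orderedSimplex]
  rw [this]
  exact (MeasurableSet.iInter fun j => measurableSet_Icc.preimage (measurable_pi_apply j)).inter
    (measurableSet_setOf_strictMono n)

lemma indicator_orderedSimplex_exp_mul_sum (l : ℝ) (n : ℕ) :
    (orderedSimplex n).indicator (fun s => exp (l * ∑ j, s j)) =
      {s | StrictMono s}.indicator fun s => ∏ j, expWeight l (s j) := by
  ext s
  by_cases hbox : ∀ j, s j ∈ Icc (0 : ℝ) 1
  · have hprod : ∏ j, expWeight l (s j) = exp (l * ∑ j, s j) := by
      simp [expWeight, indicator_of_mem (hbox _), exp_sum, Finset.mul_sum]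
    simp only [indicator_apply, orderedSimplex, mem_ofPred_eq, hbox, true_and, hprod,
      implies_true]
  · obtain ⟨j, hj⟩ := not_forall.1 hbox
    have : ∏ j, expWeight l (s j) = 0 :=
      Finset.prod_eq_zero (Finset.mem_univ j) (indicator_of_notMem hj _)
    simp only [indicator_apply, orderedSimplex, mem_ofPred_eq, hbox, false_and, if_false, this,
      ite_self]

lemma setIntegral_orderedSimplex_inter (l : ℝ) {n : ℕ} {A : Set (Fin n → ℝ)}
    (hA : MeasurableSet A) :
    ∫ s in orderedSimplex n ∩ A, exp (l * ∑ j, s j) =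
      ∫ s in {s | StrictMono s}, A.indicator (fun s => ∏ j, expWeight l (s j)) s := by
  rw [inter_comm, ← setIntegral_indicator (measurableSet_orderedSimplex n),
    indicator_orderedSimplex_exp_mul_sum, setIntegral_indicator (measurableSet_setOf_strictMono n),
    inter_comm,
    setIntegral_indicator hA]

theorem factorial_mul_setIntegral_orderedSimplex (l : ℝ) (n : ℕ) :
    n.factorial * ∫ s in orderedSimplex n, exp (l * ∑ j, s j) = (∫ x, expWeight l x) ^ n := by
  rw [← inter_univ (orderedSimplex n), setIntegral_orderedSimplex_inter l MeasurableSet.univ,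
    indicator_univ, ← nsmul_eq_mul,
    ← integral_eq_factorial_smul_setIntegral_strictMono _
      fun σ s => Equiv.prod_comp σ fun j => expWeight l (s j),
    volume_pi, integral_fintype_prod_eq_pow, Fintype.card_fin]
  exact Integrable.fintype_prod fun _ => integrable_expWeight l

theorem factorial_mul_setIntegral_orderedSimplex_inter_apply_le (l t : ℝ) {n : ℕ} (k : Fin n) :
    n.factorial * ∫ s in orderedSimplex n ∩ {s | s k ≤ t}, exp (l * ∑ j, s j) =
      ∑ m ∈ Finset.Icc ((k : ℕ) + 1) n, n.choose m * (∫ x in Iic t, expWeight l x) ^ m *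
        (∫ x in (Iic t)ᶜ, expWeight l x) ^ (n - m) := by
  let φ (m : ℕ) : ℝ := if (k : ℕ) < m then 1 else 0
  have hcount (s : Fin n → ℝ) (hs : StrictMono s) :
      {s | s k ≤ t}.indicator (fun s => ∏ j, expWeight l (s j)) s =
        (∏ j, expWeight l (s j)) * φ #{j | s j ∈ Iic t} := by
    simp [φ, indicator_apply, Tuple.lt_card_le_iff_apply_le_of_monotone hs.monotone]
  have hsym (σ : Equiv.Perm (Fin n)) (s : Fin n → ℝ) :
      (∏ j, expWeight l ((s ∘ σ) j)) * φ #{j | (s ∘ σ) j ∈ Iic t} =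
        (∏ j, expWeight l (s j)) * φ #{j | s j ∈ Iic t} := by
    simp only [Function.comp_apply, Finset.card_filter,
      Equiv.prod_comp σ fun j => expWeight l (s j), Equiv.sum_comp σ fun j => if s j ∈ Iic t then 1 else 0]
  have hint :
      Integrable fun s : Fin n → ℝ => (∏ j, expWeight l (s j)) * φ #{j | s j ∈ Iic t} := by
    rw [volume_pi]
    exact integrable_prod_mul_card_filter measurableSet_Iic (integrable_expWeight l) φ
  have hA : MeasurableSet {s : Fin n → ℝ | s k ≤ t} :=
    measurableSet_le (measurable_pi_apply k) measurable_const
  rw [setIntegral_orderedSimplex_inter l hA,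
    setIntegral_congr_fun (measurableSet_setOf_strictMono n) hcount, ← nsmul_eq_mul,
    ← integral_eq_factorial_smul_setIntegral_strictMono hint hsym, volume_pi,
    integral_prod_mul_card_filter measurableSet_Iic (integrable_expWeight l), Fintype.card_fin]
  have hIcc : Finset.Icc ((k : ℕ) + 1) n = {m ∈ Finset.range (n + 1) | (k : ℕ) < m} := by
    ext m; simp only [Finset.mem_Icc, Finset.mem_filter, Finset.mem_range]; omega
  rw [hIcc, Finset.sum_filter]
  refine Finset.sum_congr rfl fun m _ => ?_
  by_cases hm : (k : ℕ) < m <;> simp [φ, hm]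

theorem stmt_5 (l : ℝ) (n : ℕ) (i : ℕ) (hi : 1 ≤ i) (hin : i ≤ n)
    (t : ℝ) (ht : t ∈ Icc (0:ℝ) 1) :
    (1 / ∫ s in orderedSimplex n, Real.exp (l * ∑ j, s j)) *
      (∫ s in orderedSimplex n ∩ {s | s ⟨i - 1, by omega⟩ ≤ t},
        Real.exp (l * ∑ j, s j)) =
    ∑ k ∈ Finset.Icc i n,
      (n.choose k : ℝ) * piExt l t ^ k * (1 - piExt l t) ^ (n - k) := by
  have hZ := factorial_mul_setIntegral_orderedSimplex l n
  have hN :=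
    factorial_mul_setIntegral_orderedSimplex_inter_apply_le l t (n := n) ⟨i - 1, by omega⟩
  rw [Nat.sub_add_cancel hi] at hN
  have hsplit := integral_add_compl (s := Iic t) measurableSet_Iic (integrable_expWeight l)
  rw [piExt_eq_div ht.1 ht.2, ← hsplit, ← sum_choose_mul_pow_mul_pow_div_add_pow
    (hsplit ▸ integral_expWeight_ne_zero l) fun m hm => (Finset.mem_Icc.1 hm).2, ← hN, hsplit,
    ← hZ]
  field_simp
end

section
/- Let n ≥ 1 and ξ₁,…,ξₙ : [0,1] → ℝ be continuously differentiable with ξⱼ' ≥ λ pointwise for a fixed λ ∈ ℝ. For 1 ≤ i ≤ k ≤ n and s ∈ [0,1), let Δ^{s,1}_{i,k} = {(t_i,…,t_k) : s < t_i < ⋯ < t_k < 1}. Then the map s ↦ (∫_{Δ^{s,1}_{i,k}} exp(Σ_{j=i}^{k} ξⱼ(tⱼ)) d𝐭) / (∫_{Δ^{s,1}_{i,k}} exp(λ Σ_{j=i}^{k} tⱼ) d𝐭) is non-decreasing in s. -/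
/-!
Both integrals are iterated integrals `∫ₛ¹ f₀(t₀) ∫_{t₀}¹ f₁(t₁) ⋯ dt₁ dt₀`, with
`fⱼ = exp ∘ ξⱼ` in the numerator and `fⱼ t = exp (λ t)` in the denominator. Call `f`
ratio-monotone over `g` when `f s * g t ≤ f t * g s` for `s ≤ t`. Since `ξⱼ t - λ t` is
nondecreasing, each `exp ∘ ξⱼ` is ratio-monotone over `exp (λ ·)`, and ratio-monotonicity is
preserved by products of nonnegative functions and by `F s = ∫ₛᵇ f`: writing
`∫ₛᵇ = ∫ₛᵗ + ∫ₜᵇ`, the defect `F s * G t - F t * G s` is `∫ₛᵗ (f x * G t - F t * g x) dx`, and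
each integrand is `≤ 0` by integrating `f x * g r ≤ f r * g x` over `r ∈ [t, b]`. Induction on
the number of variables gives that the ratio of the two iterated integrals is nondecreasing.
-/

open Set Real MeasureTheory

/-- The open simplex of strictly increasing tuples in `(s,1)`. -/
def openSimplexIn (m : ℕ) (s : ℝ) : Set (Fin m → ℝ) :=
  {u | (∀ j, s < u j ∧ u j < 1) ∧ StrictMono u}

/-- `f / g` is monotone on `S`, cross-multiplied so that no positivity is needed. -/
def RatioMonotoneOn (f g : ℝ → ℝ) (S : Set ℝ) : Prop :=
  ∀ ⦃s⦄, s ∈ S → ∀ ⦃t⦄, t ∈ S → s ≤ t → f s * g t ≤ f t * g s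

namespace RatioMonotoneOn

variable {f g : ℝ → ℝ} {S : Set ℝ}

theorem monotoneOn_div (h : RatioMonotoneOn f g S) (hg : ∀ x ∈ S, 0 < g x) :
    MonotoneOn (fun x => f x / g x) S := fun _ hs _ ht hst =>
  (div_le_div_iff₀ (hg _ hs) (hg _ ht)).2 (h hs ht hst)

theorem mul {f₂ g₂ : ℝ → ℝ} (h : RatioMonotoneOn f g S) (h₂ : RatioMonotoneOn f₂ g₂ S)
    (hf : ∀ x ∈ S, 0 ≤ f x) (hg : ∀ x ∈ S, 0 ≤ g x)
    (hf₂ : ∀ x ∈ S, 0 ≤ f₂ x) (hg₂ : ∀ x ∈ S, 0 ≤ g₂ x) :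
    RatioMonotoneOn (f * f₂) (g * g₂) S := fun s hs t ht hst =>
  calc f s * f₂ s * (g t * g₂ t) = (f s * g t) * (f₂ s * g₂ t) := by ring
    _ ≤ (f t * g s) * (f₂ t * g₂ s) :=
      mul_le_mul (h hs ht hst) (h₂ hs ht hst) (mul_nonneg (hf₂ s hs) (hg₂ t ht))
        (mul_nonneg (hf t ht) (hg s hs))
    _ = f t * f₂ t * (g s * g₂ s) := by ring

theorem intervalIntegral {a b : ℝ} (h : RatioMonotoneOn f g (Icc a b))
    (hf : IntervalIntegrable f volume a b) (hg : IntervalIntegrable g volume a b) :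
    RatioMonotoneOn (fun s => ∫ x in s..b, f x) (fun s => ∫ x in s..b, g x) (Icc a b) := by
  intro s hs t ht hst
  have hf' : ∀ {c d}, c ∈ Icc a b → d ∈ Icc a b → IntervalIntegrable f volume c d :=
    fun hc hd => hf.mono_set (uIcc_subset_uIcc (Icc_subset_uIcc hc) (Icc_subset_uIcc hd))
  have hg' : ∀ {c d}, c ∈ Icc a b → d ∈ Icc a b → IntervalIntegrable g volume c d :=
    fun hc hd => hg.mono_set (uIcc_subset_uIcc (Icc_subset_uIcc hc) (Icc_subset_uIcc hd))
  have hb : b ∈ Icc a b := ⟨hs.1.trans (hst.trans ht.2), le_rfl⟩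
  set F := ∫ x in t..b, f x
  set G := ∫ x in t..b, g x
  have key : ∀ x ∈ Icc s t, f x * G - F * g x ≤ 0 := by
    intro x hx
    have hxab : x ∈ Icc a b := ⟨hs.1.trans hx.1, hx.2.trans ht.2⟩
    have : f x * G ≤ F * g x :=
      calc f x * G = ∫ r in t..b, f x * g r := (intervalIntegral.integral_const_mul _ _).symm
        _ ≤ ∫ r in t..b, f r * g x :=
          intervalIntegral.integral_mono_on ht.2 ((hg' ht hb).const_mul _)
            ((hf' ht hb).mul_const _) fun r hr => h hxab ⟨ht.1.trans hr.1, hr.2⟩ (hx.2.trans hr.1)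
        _ = F * g x := intervalIntegral.integral_mul_const _ _
    linarith
  have hdiff : (∫ x in s..t, f x) * G - F * ∫ x in s..t, g x =
      ∫ x in s..t, (f x * G - F * g x) := by
    rw [intervalIntegral.integral_sub ((hf' hs ht).mul_const _) ((hg' hs ht).const_mul _),
      intervalIntegral.integral_mul_const, intervalIntegral.integral_const_mul]
  have hneg : ∫ x in s..t, (f x * G - F * g x) ≤ 0 := by
    simpa using intervalIntegral.integral_mono_on hst
      (((hf' hs ht).mul_const _).sub ((hg' hs ht).const_mul _)) intervalIntegrable_const key
  show (∫ x in s..b, f x) * G ≤ F * ∫ x in s..b, g x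
  rw [← intervalIntegral.integral_add_adjacent_intervals (hf' hs ht) (hf' ht hb),
    ← intervalIntegral.integral_add_adjacent_intervals (hg' hs ht) (hg' ht hb)]
  linarith

theorem mono {T : Set ℝ} (h : RatioMonotoneOn f g S) (hT : T ⊆ S) : RatioMonotoneOn f g T :=
  fun _ hs _ ht => h (hT hs) (hT ht)

end RatioMonotoneOn

/-- `∫ over s < t₀ < ⋯ < t_{m-1} < 1 of ∏ j, f j (t j)`, as an iterated integral. -/
noncomputable def simplexIntegral : (m : ℕ) → (Fin m → ℝ → ℝ) → ℝ → ℝ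
  | 0, _, _ => 1
  | m + 1, f, s => ∫ t in s..1, f 0 t * simplexIntegral m (Fin.tail f) t

theorem continuous_simplexIntegral :
    ∀ {m : ℕ} {f : Fin m → ℝ → ℝ}, (∀ j, Continuous (f j)) → Continuous (simplexIntegral m f)
  | 0, _, _ => continuous_const
  | m + 1, f, hf => by
    have h : Continuous fun t => f 0 t * simplexIntegral m (Fin.tail f) t :=
      (hf 0).mul (continuous_simplexIntegral fun j => hf j.succ)
    exact (intervalIntegral.continuous_primitive (fun _ _ => h.intervalIntegrable _ _) 1).neg.congr
      fun s => (intervalIntegral.integral_symm 1 s).symm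

theorem simplexIntegral_nonneg :
    ∀ {m : ℕ} {f : Fin m → ℝ → ℝ}, (∀ j x, 0 ≤ f j x) → ∀ {s}, s ≤ 1 → 0 ≤ simplexIntegral m f s
  | 0, _, _, _, _ => zero_le_one
  | _ + 1, _, hf, _, hs => intervalIntegral.integral_nonneg hs fun t ht =>
      mul_nonneg (hf 0 t) (simplexIntegral_nonneg (fun j => hf j.succ) ht.2)

theorem simplexIntegral_pos :
    ∀ {m : ℕ} {f : Fin m → ℝ → ℝ}, (∀ j, Continuous (f j)) → (∀ j x, 0 < f j x) →
      ∀ {s}, s < 1 → 0 < simplexIntegral m f s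
  | 0, _, _, _, _, _ => zero_lt_one
  | _ + 1, _, hfc, hf, _, hs =>
    intervalIntegral.intervalIntegral_pos_of_pos_on
      (((hfc 0).mul (continuous_simplexIntegral fun j => hfc j.succ)).intervalIntegrable _ _)
      (fun t ht => mul_pos (hf 0 t) (simplexIntegral_pos (fun j => hfc j.succ)
        (fun j => hf j.succ) ht.2)) hs

theorem ratioMonotoneOn_simplexIntegral {a : ℝ} :
    ∀ {m : ℕ} {f g : Fin m → ℝ → ℝ}, (∀ j, Continuous (f j)) → (∀ j, Continuous (g j)) →
      (∀ j x, 0 ≤ f j x) → (∀ j x, 0 ≤ g j x) → (∀ j, RatioMonotoneOn (f j) (g j) (Icc a 1)) →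
      RatioMonotoneOn (simplexIntegral m f) (simplexIntegral m g) (Icc a 1)
  | 0, _, _, _, _, _, _, _ => fun _ _ _ _ _ => le_rfl
  | _ + 1, f, g, hfc, hgc, hf, hg, hfg => by
    have hfc_tail := continuous_simplexIntegral fun j => hfc (Fin.succ j)
    have hgc_tail := continuous_simplexIntegral fun j => hgc (Fin.succ j)
    refine RatioMonotoneOn.intervalIntegral ?_ (((hfc 0).mul hfc_tail).intervalIntegrable _ _)
      (((hgc 0).mul hgc_tail).intervalIntegrable _ _)
    exact (hfg 0).mul
      (ratioMonotoneOn_simplexIntegral (fun j => hfc j.succ) (fun j => hgc j.succ)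
        (fun j => hf j.succ) (fun j => hg j.succ) fun j => hfg j.succ)
      (fun x _ => hf 0 x) (fun x _ => hg 0 x)
      (fun x hx => simplexIntegral_nonneg (fun j => hf j.succ) hx.2)
      (fun x hx => simplexIntegral_nonneg (fun j => hg j.succ) hx.2)

theorem measurableSet_openSimplexIn (m : ℕ) (s : ℝ) : MeasurableSet (openSimplexIn m s) := by
  simp only [openSimplexIn, StrictMono]
  measurability

theorem openSimplexIn_subset_Icc (m : ℕ) (s : ℝ) :
    openSimplexIn m s ⊆ Icc (fun _ => s) (fun _ => 1) :=
  fun _ hu => ⟨fun j => (hu.1 j).1.le, fun j => (hu.1 j).2.le⟩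

theorem mem_openSimplexIn_succ {m : ℕ} {s : ℝ} {u : Fin (m + 1) → ℝ} :
    u ∈ openSimplexIn (m + 1) s ↔ u 0 ∈ Ioo s 1 ∧ Fin.tail u ∈ openSimplexIn m (u 0) := by
  conv_lhs => rw [← Fin.cons_self_tail u]
  simp only [openSimplexIn, mem_ofPred_eq, Fin.strictMono_cons, Fin.forall_fin_succ,
    Fin.cons_zero, Fin.cons_succ, mem_Ioo]
  constructor
  · rintro ⟨⟨h0, hlt1⟩, hlt0, hmono⟩
    exact ⟨h0, fun j => ⟨hlt0 j, (hlt1 j).2⟩, hmono⟩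
  · rintro ⟨h0, hlt, hmono⟩
    exact ⟨⟨h0, fun j => ⟨h0.1.trans (hlt j).1, (hlt j).2⟩⟩, fun j => (hlt j).1, hmono⟩

theorem setIntegral_prod_of_sections {α β E : Type*} [MeasurableSpace α] [MeasurableSpace β]
    [NormedAddCommGroup E] [NormedSpace ℝ E] {μ : Measure α} {ν : Measure β} [SFinite μ]
    [SFinite ν] {I : Set α} {S : α → Set β} {F : α × β → E} (hI : MeasurableSet I)
    (hT : MeasurableSet {p : α × β | p.1 ∈ I ∧ p.2 ∈ S p.1})
    (hF : IntegrableOn F {p : α × β | p.1 ∈ I ∧ p.2 ∈ S p.1} (μ.prod ν)) :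
    ∫ p in {p : α × β | p.1 ∈ I ∧ p.2 ∈ S p.1}, F p ∂μ.prod ν =
      ∫ x in I, ∫ y in S x, F (x, y) ∂ν ∂μ := by
  set T := {p : α × β | p.1 ∈ I ∧ p.2 ∈ S p.1}
  calc ∫ p in T, F p ∂μ.prod ν = ∫ p, T.indicator F p ∂μ.prod ν := (integral_indicator hT).symm
    _ = ∫ x, ∫ y, T.indicator F (x, y) ∂ν ∂μ :=
      integral_prod _ ((integrable_indicator_iff hT).2 hF)
    _ = ∫ x, I.indicator (fun x => ∫ y in S x, F (x, y) ∂ν) x ∂μ := by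
      congr 1 with x
      by_cases hx : x ∈ I
      · have hS : Prod.mk x ⁻¹' T = S x := by ext y; simp [T, hx]
        rw [indicator_of_mem hx, ← integral_indicator (hS ▸ measurable_prodMk_left hT)]
        congr 1 with y
        by_cases hy : y ∈ S x <;> simp [indicator, T, hx, hy]
      · simp [indicator, T, hx]
    _ = ∫ x in I, ∫ y in S x, F (x, y) ∂ν ∂μ := integral_indicator hI

theorem integrableOn_openSimplexIn {m : ℕ} {F : (Fin m → ℝ) → ℝ} (hF : Continuous F) (s : ℝ) :
    IntegrableOn F (openSimplexIn m s) :=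
  (hF.continuousOn.integrableOn_compact isCompact_Icc).mono_set (openSimplexIn_subset_Icc m s)

theorem setIntegral_openSimplexIn_eq_simplexIntegral :
    ∀ {m : ℕ} {f : Fin m → ℝ → ℝ}, (∀ j, Continuous (f j)) → ∀ {s : ℝ}, s ≤ 1 →
      ∫ u in openSimplexIn m s, ∏ j, f j (u j) = simplexIntegral m f s
  | 0, _, _, s, _ => by
    have : openSimplexIn 0 s = univ :=
      eq_univ_of_forall fun _ => ⟨finZeroElim, fun a => a.elim0⟩
    simp [this, simplexIntegral, Measure.real, volume_pi]
  | m + 1, f, hf, s, hs => by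
    set e := MeasurableEquiv.piFinSuccAbove (fun _ : Fin (m + 1) => ℝ) 0
    have he : MeasurePreserving e := volume_preserving_piFinSuccAbove (fun _ => ℝ) 0
    set T := {p : ℝ × (Fin m → ℝ) | p.1 ∈ Ioo s 1 ∧ p.2 ∈ openSimplexIn m p.1}
    have hT : openSimplexIn (m + 1) s = e ⁻¹' T := by
      ext u
      exact mem_openSimplexIn_succ
    set F : ℝ × (Fin m → ℝ) → ℝ := fun p => f 0 p.1 * ∏ j, f j.succ (p.2 j)
    have hFe : (fun u : Fin (m + 1) → ℝ => ∏ j, f j (u j)) = F ∘ e :=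
      funext fun u => Fin.prod_univ_succ _
    have hFc : Continuous (F ∘ e) := hFe ▸ continuous_finsetProd _ fun j _ =>
      (hf j).comp (continuous_apply j)
    have hTm : MeasurableSet T := e.measurableSet_preimage.1 (hT ▸ measurableSet_openSimplexIn _ _)
    have hFT : IntegrableOn F T (volume.prod volume) :=
      (he.integrableOn_comp_preimage e.measurableEmbedding).1
        (hT ▸ integrableOn_openSimplexIn hFc s)
    calc ∫ u in openSimplexIn (m + 1) s, ∏ j, f j (u j)
        = ∫ p in T, F p ∂(volume.prod volume) := by
          rw [hT, hFe]
          exact he.setIntegral_preimage_emb e.measurableEmbedding F T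
      _ = ∫ x in Ioo s 1, ∫ v in openSimplexIn m x, F (x, v) :=
          setIntegral_prod_of_sections measurableSet_Ioo hTm hFT
      _ = ∫ x in Ioo s 1, f 0 x * simplexIntegral m (Fin.tail f) x := by
          refine setIntegral_congr_fun measurableSet_Ioo fun x hx => ?_
          rw [← setIntegral_openSimplexIn_eq_simplexIntegral (f := Fin.tail f) (fun j => hf j.succ) hx.2.le,
            ← integral_const_mul]
          rfl
      _ = simplexIntegral (m + 1) f s := by
          rw [simplexIntegral, intervalIntegral.integral_of_le hs, integral_Ioc_eq_integral_Ioo]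

theorem MonotoneOn.ratioMonotoneOn_exp {φ ψ : ℝ → ℝ} {S : Set ℝ}
    (h : MonotoneOn (fun x => φ x - ψ x) S) :
    RatioMonotoneOn (fun x => exp (φ x)) (fun x => exp (ψ x)) S := by
  intro s hs t ht hst
  rw [← exp_add, ← exp_add, exp_le_exp]
  linarith [h hs ht hst]

theorem monotoneOn_sub_mul_of_le_deriv {D : Set ℝ} (hD : Convex ℝ D) {ξ : ℝ → ℝ} {l : ℝ}
    (hξ : Differentiable ℝ ξ) (h : ∀ x ∈ interior D, l ≤ deriv ξ x) :
    MonotoneOn (fun x => ξ x - l * x) D := by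
  have hd : ∀ x, HasDerivAt (fun x => ξ x - l * x) (deriv ξ x - l) x := fun x => by
    simpa only [mul_one] using (hξ x).hasDerivAt.fun_sub ((hasDerivAt_id' x).const_mul l)
  refine monotoneOn_of_deriv_nonneg hD (fun x _ => (hd x).continuousAt.continuousWithinAt)
    (fun x _ => (hd x).differentiableAt.differentiableWithinAt) fun x hx => ?_
  rw [(hd x).deriv, sub_nonneg]
  exact h x hx

theorem stmt_8 (n : ℕ) (l : ℝ) (ξ : Fin n → ℝ → ℝ)
    (hC1 : ∀ j, ContDiff ℝ 1 (ξ j))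
    (hder : ∀ j, ∀ s ∈ Icc (0:ℝ) 1, l ≤ deriv (ξ j) s)
    (i k : ℕ) (hi : 1 ≤ i) (hik : i ≤ k) (hkn : k ≤ n) :
    MonotoneOn (fun s =>
      (∫ u in openSimplexIn (k - i + 1) s,
          Real.exp (∑ j : Fin (k - i + 1), ξ ⟨i - 1 + j, by omega⟩ (u j))) /
      (∫ u in openSimplexIn (k - i + 1) s,
          Real.exp (l * ∑ j : Fin (k - i + 1), u j))) (Ico 0 1) := by
  let f : Fin (k - i + 1) → ℝ → ℝ := fun j x => exp (ξ ⟨i - 1 + j, by omega⟩ x)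
  let g : Fin (k - i + 1) → ℝ → ℝ := fun _ x => exp (l * x)
  have hf : ∀ j, Continuous (f j) := fun j => continuous_exp.comp (hC1 _).continuous
  have hg : ∀ j, Continuous (g j) := fun _ => by fun_prop
  have hfg : ∀ j, RatioMonotoneOn (f j) (g j) (Icc 0 1) := fun j =>
    (monotoneOn_sub_mul_of_le_deriv (convex_Icc 0 1) ((hC1 _).differentiable one_ne_zero)
      fun x hx => hder _ x (interior_subset hx)).ratioMonotoneOn_exp
  have hratio := ((ratioMonotoneOn_simplexIntegral hf hg (fun _ _ => (exp_pos _).le)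
    (fun _ _ => (exp_pos _).le) hfg).mono Ico_subset_Icc_self).monotoneOn_div
      fun _ hs => simplexIntegral_pos hg (fun _ _ => exp_pos _) hs.2
  refine hratio.congr fun s hs => ?_
  dsimp only
  rw [← setIntegral_openSimplexIn_eq_simplexIntegral hf hs.2.le, ← setIntegral_openSimplexIn_eq_simplexIntegral hg hs.2.le]
  simp only [f, g, exp_sum, Finset.mul_sum]
end

section
/- Under the assumptions of the previous statement (ξⱼ' ≥ λ pointwise), the expected count E_P[#{j : tⱼ ≤ t}] satisfies E_P[#{j : tⱼ ≤ t}] ≤ n·(exp(λt) − 1)/(exp(λ) − 1) for every t ∈ [0,1] (with the right side equal to n·t when λ = 0). -/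
open Set Real MeasureTheory

/-
Let `Z` be the normalising constant and `mⱼ(a)` the unnormalised density of `tⱼ` at `a`. Integrating
out the other coordinates of the ordered simplex gives `mⱼ(a) = e^{ξⱼ(a)} Aⱼ(a) Bⱼ(a)`, where `Aⱼ`
and `Bⱼ` are the iterated integrals over the coordinates below and above `a`. The numerator is then
`∫₀ᵗ S` and `n Z = ∫₀¹ S` for the intensity `S = ∑ⱼ mⱼ`. When `S` is differentiated, the terms
coming from `Aⱼ'` and `Bⱼ'` telescope, so `S' = ∑ⱼ ξⱼ' mⱼ ≥ λ S` and `e^{-λa} S(a)` is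
nondecreasing. Chebyshev's integral inequality for `S = e^{λa} · (e^{-λa} S)` against the weight
`e^{λa}` then gives `∫₀ᵗ S / ∫₀¹ S ≤ ∫₀ᵗ e^{λa} / ∫₀¹ e^{λa} = piExt λ t`.
-/

lemma List.ofFn_update {α : Type*} {m : ℕ} (g : Fin m → α) (j : Fin m) (a : α) :
    List.ofFn (Function.update g j a) = (List.ofFn g).set j a := by
  refine List.ext_getElem (by simp) fun i _ _ => ?_
  simp only [List.getElem_ofFn, List.getElem_set, Function.update_apply, Fin.ext_iff, eq_comm]

section ChainIntegral

open intervalIntegral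
open scoped Interval

lemma integral_integral_swap_triangle {Φ : ℝ → ℝ → ℝ} (hΦ : Measurable (Function.uncurry Φ))
    {M c d : ℝ} (hcd : c ≤ d) (hM : ∀ v ∈ Icc c d, ∀ u ∈ Icc c d, |Φ v u| ≤ M) :
    ∫ v in c..d, ∫ u in v..d, Φ v u = ∫ u in c..d, ∫ v in c..u, Φ v u := by
  set F : ℝ → ℝ → ℝ := fun v u => (Ioi v).indicator (Φ v) u
  have hF_eq : Function.uncurry F = {p : ℝ × ℝ | p.1 < p.2}.indicator (Function.uncurry Φ) := by
    ext ⟨v, u⟩; simp [F, indicator_apply]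
  have hF : Integrable (Function.uncurry F)
      ((volume.restrict (Ioc c d)).prod (volume.restrict (Ioc c d))) := by
    rw [Measure.prod_restrict, ← IntegrableOn, hF_eq]
    refine Measure.integrableOn_of_bounded (M := M) ?_
      (hΦ.indicator (measurableSet_lt measurable_fst measurable_snd)).aestronglyMeasurable ?_
    · rw [Measure.prod_prod]
      exact ENNReal.mul_ne_top measure_Ioc_lt_top.ne measure_Ioc_lt_top.ne
    · refine (ae_restrict_iff' (measurableSet_Ioc.prod measurableSet_Ioc)).2 (ae_of_all _ ?_)
      rintro ⟨v, u⟩ ⟨hv, hu⟩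
      rw [indicator_apply]
      split_ifs
      · exact hM v (Ioc_subset_Icc_self hv) u (Ioc_subset_Icc_self hu)
      · simpa using (abs_nonneg _).trans (hM c ⟨le_rfl, hcd⟩ c ⟨le_rfl, hcd⟩)
  have hinner_u : ∀ v ∈ Ioc c d, ∫ u in Ioc c d, F v u = ∫ u in v..d, Φ v u := by
    intro v hv
    rw [setIntegral_indicator measurableSet_Ioi, Ioc_inter_Ioi, max_eq_right hv.1.le,
      integral_of_le hv.2]
  have hinner_v : ∀ u ∈ Ioc c d, ∫ v in Ioc c d, F v u = ∫ v in c..u, Φ v u := by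
    intro u hu
    have : ∀ v, F v u = (Iio u).indicator (fun v => Φ v u) v := by
      intro v; simp [F, indicator_apply]
    simp_rw [this]
    have hIoo : Ioc c d ∩ Iio u = Ioo c u :=
      Set.ext fun v => ⟨fun h => ⟨h.1.1, h.2⟩, fun h => ⟨⟨h.1, h.2.le.trans hu.2⟩, h.2⟩⟩
    rw [setIntegral_indicator measurableSet_Iio, hIoo, integral_of_le hu.1.le,
      integral_Ioc_eq_integral_Ioo]
  rw [integral_of_le hcd, integral_of_le hcd, ← setIntegral_congr_fun measurableSet_Ioc hinner_u,
    ← setIntegral_congr_fun measurableSet_Ioc hinner_v]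
  exact integral_integral_swap hF

/-- `chainIntegral [f₁, …, fₘ] c d = ∫_{c < u₁ < ⋯ < uₘ < d} f₁ u₁ ⋯ fₘ uₘ`. -/
noncomputable def chainIntegral : List (ℝ → ℝ) → ℝ → ℝ → ℝ
  | [], _, _ => 1
  | f :: fs, c, d => ∫ u in c..d, f u * chainIntegral fs u d

@[simp] lemma chainIntegral_nil (c d : ℝ) : chainIntegral [] c d = 1 := rfl

lemma chainIntegral_cons (f : ℝ → ℝ) (fs : List (ℝ → ℝ)) (c d : ℝ) :
    chainIntegral (f :: fs) c d = ∫ u in c..d, f u * chainIntegral fs u d := rfl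

lemma chainIntegral_nonneg {fs : List (ℝ → ℝ)} (hfs : ∀ f ∈ fs, ∀ x, 0 ≤ f x) {c d : ℝ}
    (hcd : c ≤ d) : 0 ≤ chainIntegral fs c d := by
  induction fs generalizing c with
  | nil => simp
  | cons f fs ih =>
    rw [List.forall_mem_cons] at hfs
    exact integral_nonneg hcd fun u hu => mul_nonneg (hfs.1 u) (ih hfs.2 hu.2)

lemma abs_chainIntegral_le {C : ℝ} {fs : List (ℝ → ℝ)} (hfs : ∀ f ∈ fs, ∀ x, |f x| ≤ C)
    {a b c d : ℝ} (hc : c ∈ Icc a b) (hd : d ∈ Icc a b) :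
    |chainIntegral fs c d| ≤ (C * (b - a)) ^ fs.length := by
  induction fs generalizing c with
  | nil => simp
  | cons f fs ih =>
    rw [List.forall_mem_cons] at hfs
    have hC : 0 ≤ C := (abs_nonneg _).trans (hfs.1 0)
    have hbound : ∀ u ∈ Ι c d, ‖f u * chainIntegral fs u d‖ ≤ C * (C * (b - a)) ^ fs.length :=
      fun u hu => by
        rw [Real.norm_eq_abs, abs_mul]
        exact mul_le_mul (hfs.1 u) (ih hfs.2 (uIcc_subset_Icc hc hd (uIoc_subset_uIcc hu)))
          (abs_nonneg _) hC
    have hdc : |d - c| ≤ b - a :=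
      abs_sub_le_iff.2 ⟨by linarith [hc.1, hd.2], by linarith [hc.2, hd.1]⟩
    calc |chainIntegral (f :: fs) c d|
        ≤ C * (C * (b - a)) ^ fs.length * |d - c| := norm_integral_le_of_norm_le_const hbound
      _ ≤ C * (C * (b - a)) ^ fs.length * (b - a) := by
          have : 0 ≤ b - a := by linarith [hc.1, hc.2]
          gcongr
      _ = (C * (b - a)) ^ (f :: fs).length := by rw [List.length_cons, pow_succ]; ring

lemma measurable_chainIntegral {fs : List (ℝ → ℝ)} (hfs : ∀ f ∈ fs, Measurable f) :
    Measurable fun p : ℝ × ℝ => chainIntegral fs p.1 p.2 := by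
  induction fs with
  | nil => exact measurable_const
  | cons f fs ih =>
    rw [List.forall_mem_cons] at hfs
    set F : ℝ × ℝ → ℝ → ℝ := fun p u => f u * chainIntegral fs u p.2
    have hF : Measurable (Function.uncurry F) :=
      (hfs.1.comp measurable_snd).mul ((ih hfs.2).comp (measurable_snd.prodMk measurable_fst.snd))
    have hIoc : ∀ a b : ℝ × ℝ → ℝ, Measurable a → Measurable b →
        Measurable fun p => ∫ u in Ioc (a p) (b p), F p u := by
      intro a b ha hb
      have hS : MeasurableSet {q : (ℝ × ℝ) × ℝ | q.2 ∈ Ioc (a q.1) (b q.1)} :=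
        (measurableSet_lt (ha.comp measurable_fst) measurable_snd).inter
          (measurableSet_le measurable_snd (hb.comp measurable_fst))
      have := (hF.indicator hS).stronglyMeasurable.integral_prod_right'
        (ν := (volume : Measure ℝ)) |>.measurable
      convert this using 2 with p
      rw [← MeasureTheory.integral_indicator measurableSet_Ioc]
      rfl
    exact (hIoc _ _ measurable_fst measurable_snd).sub (hIoc _ _ measurable_snd measurable_fst)

lemma continuous_chainIntegral {fs : List (ℝ → ℝ)} (hfs : ∀ f ∈ fs, Continuous f) :
    Continuous fun p : ℝ × ℝ => chainIntegral fs p.1 p.2 := by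
  induction fs with
  | nil => exact continuous_const
  | cons f fs ih =>
    rw [List.forall_mem_cons] at hfs
    have hF : Continuous (Function.uncurry fun (p : ℝ × ℝ) u => f u * chainIntegral fs u p.2) :=
      (hfs.1.comp continuous_snd).mul ((ih hfs.2).comp (continuous_snd.prodMk continuous_fst.snd))
    have h := (continuous_parametric_intervalIntegral_of_continuous (μ := volume) (a₀ := 0) hF
      continuous_snd).sub (continuous_parametric_intervalIntegral_of_continuous (μ := volume)
      (a₀ := 0) hF continuous_fst)
    refine h.congr fun p => ?_
    rw [Pi.sub_apply, chainIntegral_cons, integral_interval_sub_left] <;>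
      exact (hF.comp (continuous_const.prodMk continuous_id)).intervalIntegrable _ _

lemma chainIntegral_append_cons {C : ℝ} {f : ℝ → ℝ} {fs gs : List (ℝ → ℝ)}
    (hf : Measurable f) (hfC : ∀ x, |f x| ≤ C)
    (hfs : ∀ g ∈ fs, Measurable g) (hfsC : ∀ g ∈ fs, ∀ x, |g x| ≤ C)
    (hgs : ∀ g ∈ gs, Measurable g) (hgsC : ∀ g ∈ gs, ∀ x, |g x| ≤ C) {c d : ℝ} (hcd : c ≤ d) :
    chainIntegral (fs ++ f :: gs) c d =
      ∫ a in c..d, f a * chainIntegral fs c a * chainIntegral gs a d := by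
  induction fs generalizing c with
  | nil => simp [chainIntegral_cons]
  | cons f₁ fs ih =>
    rw [List.forall_mem_cons] at hfs hfsC
    have hC : 0 ≤ C := (abs_nonneg _).trans (hfC 0)
    set Φ : ℝ → ℝ → ℝ := fun v u => f₁ v * (f u * chainIntegral fs v u * chainIntegral gs u d)
    have hΦ : Measurable (Function.uncurry Φ) :=
      (hfs.1.comp measurable_fst).mul (((hf.comp measurable_snd).mul
        (measurable_chainIntegral hfs.2)).mul
        ((measurable_chainIntegral hgs).comp (measurable_snd.prodMk measurable_const)))
    have hΦC : ∀ v ∈ Icc c d, ∀ u ∈ Icc c d,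
        |Φ v u| ≤ C * (C * (C * (d - c)) ^ fs.length * (C * (d - c)) ^ gs.length) := by
      intro v hv u hu
      simp only [Φ, abs_mul]
      gcongr
      exacts [hfsC.1 v, hfC u, abs_chainIntegral_le hfsC.2 hv hu,
        abs_chainIntegral_le hgsC hu ⟨hcd, le_rfl⟩]
    calc chainIntegral ((f₁ :: fs) ++ f :: gs) c d
        = ∫ v in c..d, ∫ u in v..d, Φ v u := by
          refine integral_congr fun v hv => ?_
          rw [uIcc_of_le hcd] at hv
          simp only [Φ, intervalIntegral.integral_const_mul, ← ih hfs.2 hfsC.2 hv.2]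
          rfl
      _ = ∫ u in c..d, ∫ v in c..u, Φ v u := integral_integral_swap_triangle hΦ hcd hΦC
      _ = ∫ a in c..d, f a * chainIntegral (f₁ :: fs) c a * chainIntegral gs a d := by
          refine integral_congr fun u _ => ?_
          simp only [Φ, chainIntegral_cons, ← intervalIntegral.integral_mul_const,
            ← intervalIntegral.integral_const_mul]
          congr 1 with v
          ring

lemma hasDerivAt_chainIntegral_cons_left {f : ℝ → ℝ} {fs : List (ℝ → ℝ)} (hf : Continuous f)
    (hfs : ∀ g ∈ fs, Continuous g) (d a : ℝ) :
    HasDerivAt (fun x => chainIntegral (f :: fs) x d) (-(f a * chainIntegral fs a d)) a := by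
  have h : Continuous fun u => f u * chainIntegral fs u d :=
    hf.mul ((continuous_chainIntegral hfs).comp (continuous_id.prodMk continuous_const))
  exact integral_hasDerivAt_left (h.intervalIntegrable _ _) (h.stronglyMeasurableAtFilter _ _)
    h.continuousAt

lemma hasDerivAt_chainIntegral_append_singleton {C : ℝ} {f : ℝ → ℝ} {fs : List (ℝ → ℝ)}
    (hf : Continuous f) (hfC : ∀ x, |f x| ≤ C) (hfs : ∀ g ∈ fs, Continuous g)
    (hfsC : ∀ g ∈ fs, ∀ x, |g x| ≤ C) {c a : ℝ} (ha : c < a) :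
    HasDerivAt (fun x => chainIntegral (fs ++ [f]) c x) (f a * chainIntegral fs c a) a := by
  have h : Continuous fun u => f u * chainIntegral fs c u :=
    hf.mul ((continuous_chainIntegral hfs).comp (continuous_const.prodMk continuous_id))
  refine (h.integral_hasStrictDerivAt c a).hasDerivAt.congr_of_eventuallyEq ?_
  filter_upwards [Ioi_mem_nhds ha] with x hx
  rw [chainIntegral_append_cons hf.measurable hfC (fun g hg => (hfs g hg).measurable) hfsC
    (by simp) (by simp) (le_of_lt hx)]
  simp

lemma hasDerivAt_chainIntegral_take_succ {C : ℝ} {fs : List (ℝ → ℝ)}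
    (hfs : ∀ f ∈ fs, Continuous f) (hfsC : ∀ f ∈ fs, ∀ x, |f x| ≤ C) {k : ℕ}
    (hk : k < fs.length) {c a : ℝ} (ha : c < a) :
    HasDerivAt (fun x => chainIntegral (fs.take (k + 1)) c x)
      (fs[k] a * chainIntegral (fs.take k) c a) a := by
  rw [List.take_add_one, List.getElem?_eq_getElem hk, Option.toList_some]
  exact hasDerivAt_chainIntegral_append_singleton (hfs _ (List.getElem_mem hk))
    (hfsC _ (List.getElem_mem hk)) (fun f hf => hfs f (List.mem_of_mem_take hf))
    (fun f hf => hfsC f (List.mem_of_mem_take hf)) ha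

lemma hasDerivAt_chainIntegral_drop_succ {fs : List (ℝ → ℝ)} (hfs : ∀ f ∈ fs, Continuous f)
    (k : ℕ) (d a : ℝ) :
    HasDerivAt (fun x => chainIntegral (fs.drop (k + 1)) x d)
      (-(fs.getD (k + 1) 0 a * chainIntegral (fs.drop (k + 2)) a d)) a := by
  rcases lt_or_ge (k + 1) fs.length with hk | hk
  · rw [List.drop_eq_getElem_cons hk, List.getD_eq_getElem _ _ hk]
    exact hasDerivAt_chainIntegral_cons_left (hfs _ (List.getElem_mem hk))
      (fun f hf => hfs f (List.mem_of_mem_drop hf)) d a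
  · rw [List.drop_eq_nil_of_le hk, List.drop_eq_nil_of_le (by omega), List.getD_eq_default _ _ hk]
    simpa using hasDerivAt_const a (1 : ℝ)

end ChainIntegral

def orderedSimplexIoo (m : ℕ) (c d : ℝ) : Set (Fin m → ℝ) :=
  {s | StrictMono s ∧ ∀ i, s i ∈ Ioo c d}

lemma measurableSet_orderedSimplexIoo (m : ℕ) (c d : ℝ) :
    MeasurableSet (orderedSimplexIoo m c d) := by
  have hmono : MeasurableSet {s : Fin m → ℝ | StrictMono s} := by
    have : {s : Fin m → ℝ | StrictMono s} = ⋂ (i) (j) (_ : i < j), {s | s i < s j} := by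
      ext s; simp [StrictMono]
    rw [this]
    exact .iInter fun i => .iInter fun j => .iInter fun _ =>
      measurableSet_lt (measurable_pi_apply i) (measurable_pi_apply j)
  have : orderedSimplexIoo m c d =
      {s | StrictMono s} ∩ ⋂ i, ({s | c < s i} ∩ {s | s i < d}) := by
    ext s; simp [orderedSimplexIoo]
  rw [this]
  exact hmono.inter (.iInter fun i =>
    (measurableSet_lt measurable_const (measurable_pi_apply i)).inter
      (measurableSet_lt (measurable_pi_apply i) measurable_const))

lemma cons_mem_orderedSimplexIoo {m : ℕ} {c d u : ℝ} {y : Fin m → ℝ} :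
    (Fin.cons u y : Fin (m + 1) → ℝ) ∈ orderedSimplexIoo (m + 1) c d ↔
      u ∈ Ioo c d ∧ y ∈ orderedSimplexIoo m u d := by
  change (StrictMono _ ∧ _) ↔ _ ∧ (StrictMono y ∧ _)
  simp only [Fin.strictMono_cons, Fin.forall_fin_succ, Fin.cons_zero, Fin.cons_succ, mem_Ioo]
  constructor
  · rintro ⟨⟨hu, hy⟩, hcd, hyd⟩
    exact ⟨hcd, hy, fun j => ⟨hu j, (hyd j).2⟩⟩
  · rintro ⟨hcd, hy, hyd⟩
    exact ⟨⟨fun j => (hyd j).1, hy⟩, hcd, fun j => ⟨hcd.1.trans (hyd j).1, (hyd j).2⟩⟩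

lemma orderedSimplex_ae_eq_orderedSimplexIoo (n : ℕ) :
    orderedSimplex n =ᵐ[volume] orderedSimplexIoo n 0 1 := by
  have hsub : orderedSimplexIoo n 0 1 ⊆ orderedSimplex n := fun s hs =>
    ⟨fun j => Ioo_subset_Icc_self (hs.2 j), hs.1⟩
  have hnull : volume (orderedSimplex n \ orderedSimplexIoo n 0 1) = 0 := by
    refine measure_mono_null (t := ⋃ i, ({s | s i = 0} ∪ {s | s i = 1})) ?_
      (measure_iUnion_null fun i => measure_union_null ?_ ?_)
    · rintro s ⟨⟨hs01, hs⟩, hns⟩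
      by_contra hcon
      simp only [mem_iUnion, mem_union, not_exists, not_or] at hcon
      exact hns ⟨hs, fun i => ⟨(hs01 i).1.lt_of_ne' (hcon i).1, (hs01 i).2.lt_of_ne (hcon i).2⟩⟩
    · rw [volume_pi]; exact Measure.pi_hyperplane _ i 0
    · rw [volume_pi]; exact Measure.pi_hyperplane _ i 1
  exact ae_eq_set.2 ⟨hnull, by rw [sdiff_eq_empty.2 hsub, measure_empty]⟩

lemma integrableOn_orderedSimplexIoo {m : ℕ} {M c d : ℝ} {f : (Fin m → ℝ) → ℝ}
    (hf : Measurable f) (hfM : ∀ s, |f s| ≤ M) : IntegrableOn f (orderedSimplexIoo m c d) :=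
  Measure.integrableOn_of_bounded (M := M)
    ((measure_mono (t := univ.pi fun _ => Icc c d) fun _ hs i _ =>
      Ioo_subset_Icc_self (hs.2 i)).trans_lt
        (isCompact_univ_pi fun _ => isCompact_Icc).measure_lt_top).ne
    hf.aestronglyMeasurable (ae_of_all _ hfM)

lemma setIntegral_orderedSimplexIoo_succ {m : ℕ} {c d : ℝ} {f : (Fin (m + 1) → ℝ) → ℝ}
    (hf : IntegrableOn f (orderedSimplexIoo (m + 1) c d)) :
    ∫ s in orderedSimplexIoo (m + 1) c d, f s =
      ∫ u in Ioo c d, ∫ y in orderedSimplexIoo m u d, f (Fin.cons u y) := by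
  classical
  set S := orderedSimplexIoo (m + 1) c d
  set e := MeasurableEquiv.piFinSuccAbove (fun _ : Fin (m + 1) => ℝ) 0
  have he : MeasurePreserving e.symm (volume.prod volume) volume :=
    (measurePreserving_piFinSuccAbove (fun _ : Fin (m + 1) => (volume : Measure ℝ)) 0).symm e
  have he_apply : ∀ p : ℝ × (Fin m → ℝ), e.symm p = Fin.cons p.1 p.2 := fun p =>
    Fin.insertNth_zero' p.1 p.2
  have hint : Integrable (fun p => S.indicator f (e.symm p)) (volume.prod volume) :=
    (he.integrable_comp_emb e.symm.measurableEmbedding).2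
      ((integrable_indicator_iff (measurableSet_orderedSimplexIoo _ _ _)).2 hf)
  have hslice : ∀ u, ∫ y, S.indicator f (e.symm (u, y)) =
      (Ioo c d).indicator (fun u => ∫ y in orderedSimplexIoo m u d, f (Fin.cons u y)) u := by
    intro u
    by_cases hu : u ∈ Ioo c d
    · rw [indicator_of_mem hu, ← integral_indicator (measurableSet_orderedSimplexIoo _ _ _)]
      congr with y
      simp only [indicator_apply, he_apply, S, cons_mem_orderedSimplexIoo, hu, true_and]
    · rw [indicator_of_notMem hu, ← integral_zero (Fin m → ℝ) ℝ]
      congr with y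
      exact indicator_of_notMem (by simp [he_apply, S, cons_mem_orderedSimplexIoo, hu]) _
  rw [← integral_indicator (measurableSet_orderedSimplexIoo _ _ _), ← he.integral_comp',
    integral_prod _ hint, ← integral_indicator measurableSet_Ioo]
  simp only [hslice]

lemma setIntegral_orderedSimplexIoo_prod {C : ℝ} {m : ℕ} {F : Fin m → ℝ → ℝ}
    (hF : ∀ i, Measurable (F i)) (hFC : ∀ i x, |F i x| ≤ C) {c d : ℝ} (hcd : c ≤ d) :
    ∫ s in orderedSimplexIoo m c d, ∏ i, F i (s i) = chainIntegral (List.ofFn F) c d := by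
  induction m generalizing c with
  | zero =>
    have : orderedSimplexIoo 0 c d = univ := eq_univ_of_forall fun s =>
      ⟨Subsingleton.strictMono s, fun i => i.elim0⟩
    simp [this, measureReal_def, volume_pi]
  | succ m ih =>
    have hint : IntegrableOn (fun s : Fin (m + 1) → ℝ => ∏ i, F i (s i))
        (orderedSimplexIoo (m + 1) c d) :=
      integrableOn_orderedSimplexIoo (Finset.measurable_prod _ fun i _ =>
        (hF i).comp (measurable_pi_apply i)) fun s => by
          rw [Finset.abs_prod]
          exact Finset.prod_le_prod (fun i _ => abs_nonneg _) fun i _ => hFC i (s i)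
    rw [setIntegral_orderedSimplexIoo_succ hint, List.ofFn_succ, chainIntegral_cons,
      intervalIntegral.integral_of_le hcd, integral_Ioc_eq_integral_Ioo]
    refine setIntegral_congr_fun measurableSet_Ioo fun u hu => ?_
    simp only [Fin.prod_univ_succ, Fin.cons_zero, Fin.cons_succ, integral_const_mul,
      ih (fun j => hF j.succ) (fun j => hFC j.succ) hu.2.le]

lemma setIntegral_orderedSimplexIoo_comp_mul_prod {m : ℕ} {C M c d : ℝ} {g : Fin m → ℝ → ℝ}
    (hg : ∀ i, Measurable (g i)) (hgC : ∀ i x, |g i x| ≤ C) {φ : ℝ → ℝ} (hφ : Measurable φ)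
    (hφM : ∀ x, |φ x| ≤ M) (j : Fin m) (hcd : c ≤ d) :
    ∫ s in orderedSimplexIoo m c d, φ (s j) * ∏ i, g i (s i) =
      ∫ a in c..d, φ a * (g j a * chainIntegral ((List.ofFn g).take j) c a *
        chainIntegral ((List.ofFn g).drop (j + 1)) a d) := by
  classical
  set F := Function.update g j (φ * g j)
  have hF : ∀ i, Measurable (F i) := by
    intro i
    rcases eq_or_ne i j with rfl | h
    · simpa [F] using hφ.mul (hg i)
    · simpa [F, h] using hg i
  have hφgC : ∀ x, |(φ * g j) x| ≤ max C (M * C) := fun x => by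
    rw [Pi.mul_apply, abs_mul]
    exact le_max_of_le_right
      (mul_le_mul (hφM x) (hgC j x) (abs_nonneg _) ((abs_nonneg _).trans (hφM x)))
  have hFC : ∀ i x, |F i x| ≤ max C (M * C) := by
    intro i x
    rcases eq_or_ne i j with rfl | h
    · simpa [F] using hφgC x
    · simpa [F, h] using le_max_of_le_left (hgC i x)
  have hprod : ∀ s : Fin m → ℝ, ∏ i, F i (s i) = φ (s j) * ∏ i, g i (s i) := by
    intro s
    rw [← Finset.mul_prod_erase _ _ (Finset.mem_univ j),
      ← Finset.mul_prod_erase _ (fun i => g i (s i)) (Finset.mem_univ j), ← mul_assoc]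
    congr 1
    · simp [F]
    · exact Finset.prod_congr rfl fun i hi => by simp [F, Finset.ne_of_mem_erase hi]
  have hlist : List.ofFn F = (List.ofFn g).take j ++ (φ * g j) :: (List.ofFn g).drop (j + 1) := by
    rw [List.ofFn_update, List.set_eq_take_append_cons_drop, if_pos (by simp)]
  have hgl : ∀ f ∈ List.ofFn g, Measurable f ∧ ∀ x, |f x| ≤ max C (M * C) :=
    List.forall_mem_ofFn_iff.2 fun i => ⟨hg i, fun x => le_max_of_le_left (hgC i x)⟩
  simp_rw [← hprod]
  rw [setIntegral_orderedSimplexIoo_prod hF hFC hcd, hlist,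
    chainIntegral_append_cons (hφ.mul (hg j)) hφgC
      (fun f hf => (hgl f (List.mem_of_mem_take hf)).1)
      (fun f hf => (hgl f (List.mem_of_mem_take hf)).2)
      (fun f hf => (hgl f (List.mem_of_mem_drop hf)).1)
      (fun f hf => (hgl f (List.mem_of_mem_drop hf)).2) hcd]
  exact intervalIntegral.integral_congr fun a _ => by simp only [Pi.mul_apply]; ring

section Chebyshev

open intervalIntegral

lemma integral_mul_mul_integral_le_of_monotoneOn {w h : ℝ → ℝ} {a b t : ℝ} (ht : t ∈ Icc a b)
    (hw : ∀ x ∈ Icc a b, 0 ≤ w x) (hh : MonotoneOn h (Icc a b))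
    (hwi : IntervalIntegrable w volume a b)
    (hwhi : IntervalIntegrable (fun x => w x * h x) volume a b) :
    (∫ x in a..t, w x * h x) * ∫ x in a..b, w x ≤
      (∫ x in a..t, w x) * ∫ x in a..b, w x * h x := by
  have hat : uIcc a t ⊆ uIcc a b := uIcc_subset_uIcc left_mem_uIcc (Icc_subset_uIcc ht)
  have htb : uIcc t b ⊆ uIcc a b := uIcc_subset_uIcc (Icc_subset_uIcc ht) right_mem_uIcc
  have hleft : (∫ x in a..t, w x * h x) ≤ (∫ x in a..t, w x) * h t := by
    rw [← intervalIntegral.integral_mul_const]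
    refine integral_mono_on ht.1 (hwhi.mono_set hat) ((hwi.mono_set hat).mul_const _) fun x hx => ?_
    have hx' : x ∈ Icc a b := ⟨hx.1, hx.2.trans ht.2⟩
    exact mul_le_mul_of_nonneg_left (hh hx' ht hx.2) (hw x hx')
  have hright : (∫ x in t..b, w x) * h t ≤ ∫ x in t..b, w x * h x := by
    rw [← intervalIntegral.integral_mul_const]
    refine integral_mono_on ht.2 ((hwi.mono_set htb).mul_const _) (hwhi.mono_set htb) fun x hx => ?_
    have hx' : x ∈ Icc a b := ⟨ht.1.trans hx.1, hx.2⟩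
    exact mul_le_mul_of_nonneg_left (hh ht hx' hx.1) (hw x hx')
  have hW₁ : 0 ≤ ∫ x in a..t, w x := integral_nonneg ht.1 fun x hx => hw x ⟨hx.1, hx.2.trans ht.2⟩
  have hW₂ : 0 ≤ ∫ x in t..b, w x := integral_nonneg ht.2 fun x hx => hw x ⟨ht.1.trans hx.1, hx.2⟩
  rw [← integral_add_adjacent_intervals (hwi.mono_set hat) (hwi.mono_set htb),
    ← integral_add_adjacent_intervals (hwhi.mono_set hat) (hwhi.mono_set htb)]
  nlinarith [mul_le_mul_of_nonneg_right hleft hW₂, mul_le_mul_of_nonneg_left hright hW₁]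

end Chebyshev

lemma piExt_eq_integral_div (l t : ℝ) :
    piExt l t = (∫ x in (0 : ℝ)..t, exp (l * x)) / ∫ x in (0 : ℝ)..1, exp (l * x) := by
  rcases eq_or_ne l 0 with rfl | hl
  · simp [piExt]
  · have hint : ∀ s : ℝ, ∫ x in (0 : ℝ)..s, exp (l * x) = (exp (l * s) - 1) / l := fun s => by
      rw [intervalIntegral.integral_comp_mul_left (fun x => exp x) hl, integral_exp]
      simp [div_eq_inv_mul]
    rw [hint, hint, piExt, if_neg hl, mul_one]
    field_simp

lemma piExt_nonneg {l t : ℝ} (ht : 0 ≤ t) : 0 ≤ piExt l t := by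
  rw [piExt_eq_integral_div]
  exact div_nonneg (intervalIntegral.integral_nonneg ht fun x _ => (exp_pos _).le)
    (intervalIntegral.integral_nonneg zero_le_one fun x _ => (exp_pos _).le)

namespace GibbsSimplex

variable {n : ℕ} (ξ : Fin n → ℝ → ℝ)

/-- `exp ∘ ξ j`, frozen outside `[0, 1]` so that it is continuous and bounded on all of `ℝ`. -/
noncomputable def factor (j : Fin n) (u : ℝ) : ℝ :=
  exp (ξ j (projIcc 0 1 zero_le_one u))

/-- The density of `tⱼ` at `a`, multiplied by the normalising constant. -/
noncomputable def marginal (j : Fin n) (a : ℝ) : ℝ :=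
  factor ξ j a * chainIntegral ((List.ofFn (factor ξ)).take j) 0 a *
    chainIntegral ((List.ofFn (factor ξ)).drop (j + 1)) a 1

noncomputable def intensity (a : ℝ) : ℝ := ∑ j, marginal ξ j a

variable {ξ}

lemma factor_of_mem {j : Fin n} {u : ℝ} (hu : u ∈ Icc (0 : ℝ) 1) :
    factor ξ j u = exp (ξ j u) := by
  simp [factor, projIcc_of_mem _ hu]

lemma continuous_factor (hξ : ∀ j, Continuous (ξ j)) (j : Fin n) : Continuous (factor ξ j) :=
  continuous_exp.comp ((hξ j).comp (continuous_subtype_val.comp continuous_projIcc))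

lemma exists_abs_factor_le (hξ : ∀ j, Continuous (ξ j)) : ∃ C, ∀ j u, |factor ξ j u| ≤ C := by
  have hcont : Continuous fun p : Fin n × Icc (0 : ℝ) 1 => exp (ξ p.1 p.2) :=
    continuous_prod_of_discrete_left.2 fun j =>
      continuous_exp.comp ((hξ j).comp continuous_subtype_val)
  obtain ⟨C, hC⟩ := isCompact_univ.exists_bound_of_continuousOn hcont.continuousOn
  exact ⟨C, fun j u => hC (j, projIcc 0 1 zero_le_one u) trivial⟩

lemma exp_sum_eq_prod_factor {s : Fin n → ℝ} (hs : ∀ i, s i ∈ Icc (0 : ℝ) 1) :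
    exp (∑ i, ξ i (s i)) = ∏ i, factor ξ i (s i) := by
  rw [exp_sum]
  exact Finset.prod_congr rfl fun i _ => (factor_of_mem (hs i)).symm

lemma continuous_marginal (hξ : ∀ j, Continuous (ξ j)) (j : Fin n) :
    Continuous (marginal ξ j) := by
  have hlist : ∀ f ∈ List.ofFn (factor ξ), Continuous f :=
    List.forall_mem_ofFn_iff.2 (continuous_factor hξ)
  exact ((continuous_factor hξ j).mul ((continuous_chainIntegral fun f hf =>
    hlist f (List.mem_of_mem_take hf)).comp (continuous_const.prodMk continuous_id))).mul
    ((continuous_chainIntegral fun f hf => hlist f (List.mem_of_mem_drop hf)).comp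
      (continuous_id.prodMk continuous_const))

lemma continuous_intensity (hξ : ∀ j, Continuous (ξ j)) : Continuous (intensity ξ) :=
  continuous_finsetSum _ fun j _ => continuous_marginal hξ j

lemma setIntegral_orderedSimplex_mul_exp (hξ : ∀ j, Continuous (ξ j)) {M : ℝ} {φ : ℝ → ℝ}
    (hφ : Measurable φ) (hφM : ∀ x, |φ x| ≤ M) (j : Fin n) :
    ∫ s in orderedSimplex n, φ (s j) * exp (∑ i, ξ i (s i)) =
      ∫ a in (0 : ℝ)..1, φ a * marginal ξ j a := by
  obtain ⟨C, hC⟩ := exists_abs_factor_le hξ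
  rw [setIntegral_congr_set (orderedSimplex_ae_eq_orderedSimplexIoo n),
    setIntegral_congr_fun (measurableSet_orderedSimplexIoo n 0 1) fun s hs => by
      rw [exp_sum_eq_prod_factor fun i => Ioo_subset_Icc_self (hs.2 i)]]
  exact setIntegral_orderedSimplexIoo_comp_mul_prod (fun i => (continuous_factor hξ i).measurable)
    hC hφ hφM j zero_le_one

lemma integrableOn_orderedSimplex_mul_exp (hξ : ∀ j, Continuous (ξ j)) {M : ℝ} {φ : ℝ → ℝ}
    (hφ : Measurable φ) (hφM : ∀ x, |φ x| ≤ M) (j : Fin n) :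
    IntegrableOn (fun s => φ (s j) * exp (∑ i, ξ i (s i))) (orderedSimplex n) := by
  obtain ⟨C, hC⟩ := exists_abs_factor_le hξ
  have hmeas : Measurable fun s : Fin n → ℝ => φ (s j) * ∏ i, factor ξ i (s i) :=
    (hφ.comp (measurable_pi_apply j)).mul (Finset.measurable_prod _ fun i _ =>
      (continuous_factor hξ i).measurable.comp (measurable_pi_apply i))
  have hbound : ∀ s : Fin n → ℝ, |φ (s j) * ∏ i, factor ξ i (s i)| ≤ M * ∏ _i : Fin n, C := by
    intro s
    rw [abs_mul, Finset.abs_prod]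
    exact mul_le_mul (hφM _) (Finset.prod_le_prod (fun i _ => abs_nonneg _) fun i _ => hC i _)
      (by positivity) ((abs_nonneg _).trans (hφM 0))
  refine ((integrableOn_orderedSimplexIoo hmeas hbound).congr_fun (fun s hs => ?_)
    (measurableSet_orderedSimplexIoo n 0 1)).congr_set_ae
    (orderedSimplex_ae_eq_orderedSimplexIoo n)
  rw [exp_sum_eq_prod_factor fun i => Ioo_subset_Icc_self (hs.2 i)]

lemma marginal_nonneg (j : Fin n) {a : ℝ} (ha : a ∈ Icc (0 : ℝ) 1) : 0 ≤ marginal ξ j a := by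
  have hpos : ∀ f ∈ List.ofFn (factor ξ), ∀ x, 0 ≤ f x :=
    List.forall_mem_ofFn_iff.2 fun _ _ => (exp_pos _).le
  exact mul_nonneg (mul_nonneg (exp_pos _).le
    (chainIntegral_nonneg (fun f hf => hpos f (List.mem_of_mem_take hf)) ha.1))
    (chainIntegral_nonneg (fun f hf => hpos f (List.mem_of_mem_drop hf)) ha.2)

lemma setIntegral_card_mul_exp (hξ : ∀ j, Continuous (ξ j)) {t : ℝ} (ht : t ∈ Icc (0 : ℝ) 1) :
    ∫ s in orderedSimplex n,
        ((Finset.univ.filter fun j : Fin n => s j ≤ t).card : ℝ) * exp (∑ j, ξ j (s j)) =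
      ∫ a in (0 : ℝ)..t, intensity ξ a := by
  have hφ : Measurable fun x : ℝ => if x ≤ t then (1 : ℝ) else 0 :=
    Measurable.ite measurableSet_Iic measurable_const measurable_const
  have hφM : ∀ x : ℝ, |if x ≤ t then (1 : ℝ) else 0| ≤ 1 := fun x => by split_ifs <;> simp
  simp_rw [Finset.natCast_card_filter, Finset.sum_mul, intensity]
  rw [integral_finsetSum _ fun j _ => integrableOn_orderedSimplex_mul_exp hξ hφ hφM j,
    intervalIntegral.integral_finsetSum fun j _ =>
      (continuous_marginal hξ j).intervalIntegrable _ _]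
  refine Finset.sum_congr rfl fun j _ => ?_
  rw [setIntegral_orderedSimplex_mul_exp hξ hφ hφM, ← intervalIntegral.integral_indicator ht]
  congr with a
  by_cases h : a ≤ t <;> simp [h]

lemma natCast_mul_setIntegral_exp (hξ : ∀ j, Continuous (ξ j)) :
    (n : ℝ) * ∫ s in orderedSimplex n, exp (∑ j, ξ j (s j)) = ∫ a in (0 : ℝ)..1, intensity ξ a := by
  have h := setIntegral_orderedSimplex_mul_exp hξ measurable_const (fun _ => le_refl |(1 : ℝ)|)
  simp only [one_mul] at h
  simp only [intensity]
  rw [intervalIntegral.integral_finsetSum fun j _ =>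
    (continuous_marginal hξ j).intervalIntegrable _ _]
  simp [← h]

lemma hasDerivAt_factor (hξ : ∀ j, Differentiable ℝ (ξ j)) (j : Fin n) {a : ℝ}
    (ha : a ∈ Ioo (0 : ℝ) 1) : HasDerivAt (factor ξ j) (deriv (ξ j) a * factor ξ j a) a := by
  rw [factor_of_mem (Ioo_subset_Icc_self ha), mul_comm]
  refine ((hξ j a).hasDerivAt.exp).congr_of_eventuallyEq ?_
  filter_upwards [isOpen_Ioo.mem_nhds ha] with x hx
  exact factor_of_mem (Ioo_subset_Icc_self hx)

lemma hasDerivAt_intensity (hξ : ∀ j, Differentiable ℝ (ξ j)) {a : ℝ} (ha : a ∈ Ioo (0 : ℝ) 1) :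
    HasDerivAt (intensity ξ) (∑ j, deriv (ξ j) a * marginal ξ j a) a := by
  have hξc : ∀ j, Continuous (ξ j) := fun j => (hξ j).continuous
  obtain ⟨C, hC⟩ := exists_abs_factor_le hξc
  set gl := List.ofFn (factor ξ)
  have hglc : ∀ f ∈ gl, Continuous f := List.forall_mem_ofFn_iff.2 (continuous_factor hξc)
  set g : ℕ → ℝ → ℝ := fun k => gl.getD k 0
  have hg : ∀ j : Fin n, g j = factor ξ j := fun j => by simp [g, gl]
  set A : ℕ → ℝ → ℝ := fun k x => chainIntegral (gl.take k) 0 x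
  set A' : ℕ → ℝ := fun | 0 => 0 | k + 1 => g k a * A k a
  have hA : ∀ k ≤ n, HasDerivAt (A k) (A' k) a := by
    rintro (_ | k) hk
    · simpa [A, A'] using hasDerivAt_const a (1 : ℝ)
    · have hk' : k < gl.length := by simpa [gl] using hk
      simpa only [A, A', g, List.getD_eq_getElem _ _ hk'] using
        hasDerivAt_chainIntegral_take_succ hglc (List.forall_mem_ofFn_iff.2 (hC ·)) hk' ha.1
  -- The `A'`-part of the derivative of `marginal ξ j` is `R j`, its `B'`-part is `-R (j + 1)`.
  set R : ℕ → ℝ := fun k => g k a * A' k * chainIntegral (gl.drop (k + 1)) a 1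
  have hmarginal : ∀ j : Fin n, HasDerivAt (marginal ξ j)
      (deriv (ξ j) a * marginal ξ j a + (R j - R (j + 1))) a := by
    intro j
    refine HasDerivAt.congr_deriv (f := marginal ξ j) (((hasDerivAt_factor hξ j ha).mul
      (hA j j.isLt.le)).mul (hasDerivAt_chainIntegral_drop_succ hglc j 1 a)) ?_
    simp only [R, A', hg, marginal, Pi.mul_apply]
    ring
  have htelescope : ∑ j : Fin n, (R j - R (j + 1)) = 0 := by
    have hgn : g n = 0 := List.getD_eq_default _ _ (by simp [gl])
    rw [Fin.sum_univ_eq_sum_range (fun k => R k - R (k + 1)), Finset.sum_range_sub']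
    simp [R, A', hgn]
  have hsum := HasDerivAt.sum fun j (_ : j ∈ Finset.univ) => hmarginal j
  rw [Finset.sum_add_distrib, htelescope, add_zero] at hsum
  have hfun : intensity ξ = ∑ j, marginal ξ j := funext fun x => by simp [intensity]
  rwa [hfun]

lemma monotoneOn_exp_neg_mul_intensity (hξ : ∀ j, Differentiable ℝ (ξ j)) {l : ℝ}
    (hl : ∀ j, ∀ s ∈ Icc (0 : ℝ) 1, l ≤ deriv (ξ j) s) :
    MonotoneOn (fun a => exp (-(l * a)) * intensity ξ a) (Icc 0 1) := by
  have hderiv : ∀ a ∈ Ioo (0 : ℝ) 1, HasDerivAt (fun a => exp (-(l * a)) * intensity ξ a)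
      (exp (-(l * a)) * ∑ j, (deriv (ξ j) a - l) * marginal ξ j a) a := by
    intro a ha
    refine (((hasDerivAt_id a).const_mul l).neg.exp.mul (hasDerivAt_intensity hξ ha)).congr_deriv ?_
    simp only [intensity, sub_mul, Finset.sum_sub_distrib, ← Finset.mul_sum, Pi.neg_apply, id]
    ring
  refine monotoneOn_of_deriv_nonneg (convex_Icc 0 1)
    ((continuous_exp.comp (continuous_const.mul continuous_id).neg).mul
      (continuous_intensity fun j => (hξ j).continuous)).continuousOn
    (fun a ha => ?_) fun a ha => ?_
  all_goals rw [interior_Icc] at ha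
  · exact (hderiv a ha).differentiableAt.differentiableWithinAt
  · rw [(hderiv a ha).deriv]
    refine mul_nonneg (exp_pos _).le (Finset.sum_nonneg fun j _ => mul_nonneg ?_ ?_)
    · linarith [hl j a (Ioo_subset_Icc_self ha)]
    · exact marginal_nonneg j (Ioo_subset_Icc_self ha)

lemma integral_intensity_le (hξ : ∀ j, Differentiable ℝ (ξ j)) {l : ℝ}
    (hl : ∀ j, ∀ s ∈ Icc (0 : ℝ) 1, l ≤ deriv (ξ j) s) {t : ℝ} (ht : t ∈ Icc (0 : ℝ) 1) :
    ∫ a in (0 : ℝ)..t, intensity ξ a ≤ piExt l t * ∫ a in (0 : ℝ)..1, intensity ξ a := by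
  have hw : Continuous fun x => exp (l * x) := by fun_prop
  have hW : 0 < ∫ x in (0 : ℝ)..1, exp (l * x) :=
    intervalIntegral.intervalIntegral_pos_of_pos_on (hw.intervalIntegrable _ _)
      (fun x _ => exp_pos _) one_pos
  have hcancel : ∀ x, exp (l * x) * (exp (-(l * x)) * intensity ξ x) = intensity ξ x := fun x => by
    rw [← mul_assoc, ← exp_add, add_neg_cancel, exp_zero, one_mul]
  have h := integral_mul_mul_integral_le_of_monotoneOn ht (fun x _ => (exp_pos (l * x)).le)
    (monotoneOn_exp_neg_mul_intensity hξ hl) (hw.intervalIntegrable _ _)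
    (by simpa only [hcancel] using
      (continuous_intensity fun j => (hξ j).continuous).intervalIntegrable 0 1)
  simp only [hcancel] at h
  rw [piExt_eq_integral_div, div_mul_eq_mul_div, le_div_iff₀ hW]
  linarith

end GibbsSimplex

theorem stmt_11_general (n : ℕ) (l : ℝ) (ξ : Fin n → ℝ → ℝ)
    (hC1 : ∀ j, ContDiff ℝ 1 (ξ j))
    (hder : ∀ j, ∀ s ∈ Icc (0:ℝ) 1, l ≤ deriv (ξ j) s)
    (t : ℝ) (ht : t ∈ Icc (0:ℝ) 1) :
    (∫ s in orderedSimplex n,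
        ((Finset.univ.filter (fun j : Fin n => s j ≤ t)).card : ℝ) *
          Real.exp (∑ j, ξ j (s j))) /
      (∫ s in orderedSimplex n, Real.exp (∑ j, ξ j (s j))) ≤
    (n : ℝ) * piExt l t := by
  have hξ : ∀ j, Differentiable ℝ (ξ j) := fun j => (hC1 j).differentiable one_ne_zero
  have hξc : ∀ j, Continuous (ξ j) := fun j => (hξ j).continuous
  rw [GibbsSimplex.setIntegral_card_mul_exp hξc ht]
  -- `div_le_of_le_mul₀` needs no positivity of the denominator, since `x / 0 = 0`.
  refine div_le_of_le_mul₀ (integral_nonneg fun _ => (exp_pos _).le)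
    (mul_nonneg n.cast_nonneg (piExt_nonneg ht.1)) ?_
  rw [mul_assoc, mul_left_comm, GibbsSimplex.natCast_mul_setIntegral_exp hξc]
  exact GibbsSimplex.integral_intensity_le hξ hder ht

theorem stmt_11 (n : ℕ) (hn : 1 ≤ n) (l : ℝ) (ξ : Fin n → ℝ → ℝ)
    (hC1 : ∀ j, ContDiff ℝ 1 (ξ j))
    (hder : ∀ j, ∀ s ∈ Icc (0:ℝ) 1, l ≤ deriv (ξ j) s)
    (t : ℝ) (ht : t ∈ Icc (0:ℝ) 1) :
    (∫ s in orderedSimplex n,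
        ((Finset.univ.filter (fun j : Fin n => s j ≤ t)).card : ℝ) *
          Real.exp (∑ j, ξ j (s j))) /
      (∫ s in orderedSimplex n, Real.exp (∑ j, ξ j (s j))) ≤
    (n : ℝ) * piExt l t :=
  stmt_11_general n l ξ hC1 hder t ht
end

section
/- For λ ≠ 0 and 0 ≤ s < u ≤ 1, the shifted function π^{s,u}_λ(t) = (exp(λ(t−s)) − 1)/(exp(λ(u−s)) − 1) satisfies: for fixed t ∈ (s,u], the map s ↦ π^{s,u}_λ(t) is non-increasing in s on [0,t) when λ > 0. -/
open Set Real

theorem stmt_16 (l t u : ℝ) (hl : 0 < l) (ht : 0 < t) (htu : t ≤ u) (hu : u ≤ 1) :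
    AntitoneOn (fun s => (Real.exp (l * (t - s)) - 1) / (Real.exp (l * (u - s)) - 1))
      (Ico 0 t) := by
  intro s1 hs1 s2 hs2 h12
  simp only
  set A1 := Real.exp (l * (t - s1)) with hA1def
  set A2 := Real.exp (l * (t - s2)) with hA2def
  set c := Real.exp (l * (u - t)) with hcdef
  have hA1 : 1 < A1 := by
    rw [hA1def, show (1:ℝ) = Real.exp 0 by simp]
    exact Real.exp_lt_exp.mpr (by nlinarith [hs1.2])
  have hA2 : 1 < A2 := by
    rw [hA2def, show (1:ℝ) = Real.exp 0 by simp]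
    exact Real.exp_lt_exp.mpr (by nlinarith [hs2.2])
  have hc : 1 ≤ c := Real.one_le_exp (by nlinarith)
  have hle : A2 ≤ A1 := Real.exp_le_exp.mpr (by nlinarith)
  have hsplit1 : Real.exp (l * (u - s1)) = A1 * c := by
    rw [hA1def, hcdef, ← Real.exp_add]; ring_nf
  have hsplit2 : Real.exp (l * (u - s2)) = A2 * c := by
    rw [hA2def, hcdef, ← Real.exp_add]; ring_nf
  rw [hsplit1, hsplit2]
  have hd1 : 0 < A1 * c - 1 := by nlinarith
  have hd2 : 0 < A2 * c - 1 := by nlinarith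
  rw [div_le_div_iff₀ hd2 hd1]
  nlinarith [mul_le_mul_of_nonneg_right hle (sub_nonneg.mpr hc)]
end
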